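/- Let (Ω,μ) = ∏_{i=1}^n (Ω_i,μ_i) be a finite product probability space in which each factor Ω_i is partially ordered and each μ_i is positively associated. Let A_1,…,A_k ⊆ Ω be events that are all increasing, define X(ω) = max{|I| : I ⊆ [k] and A_i, i ∈ I, occur disjointly at ω}, and set λ = Σ_{i=1}^k μ(A_i). Then for every t ≥ 0, μ({ω : X(ω) ≥ λ + t}) ≤ exp(−t²/(2(λ + t/3))). -/

import Mathlib

open MeasureTheory ProbabilityTheory

/-- The events `A j`, `j ∈ I`, occur disjointly at `ω`: there are pairwise disjoint
sets `S j ⊆ [n]` such that every `ω'` agreeing with `ω` on `S j` lies in `A j`. -/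
def OccurDisjointly {n : ℕ} {Ω : Fin n → Type*} {ι : Type*}
    (A : ι → Set (∀ i, Ω i)) (I : Finset ι) (ω : ∀ i, Ω i) : Prop :=
  ∃ S : ι → Finset (Fin n),
    (∀ j ∈ I, ∀ j' ∈ I, j ≠ j' → Disjoint (S j) (S j')) ∧
    ∀ j ∈ I, ∀ ω' : ∀ i, Ω i, (∀ i ∈ S j, ω' i = ω i) → ω' ∈ A j

/-- `X ω` is the maximum size of a set `I ⊆ [k]` such that the events
`A j`, `j ∈ I`, occur disjointly at `ω`. -/
noncomputable def maxDisjOcc {n k : ℕ} {Ω : Fin n → Type*}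
    (A : Fin k → Set (∀ i, Ω i)) (ω : ∀ i, Ω i) : ℕ :=
  sSup {m : ℕ | ∃ I : Finset (Fin k), I.card = m ∧ OccurDisjointly A I ω}

/-- A probability measure on a partially ordered space is positively associated if
`m A * m B ≤ m (A ∩ B)` for all increasing (upper) sets `A, B`. -/
def PositivelyAssociated {Γ : Type*} [Preorder Γ] [MeasurableSpace Γ]
    (m : Measure Γ) : Prop :=
  ∀ A B : Set Γ, IsUpperSet A → IsUpperSet B → m A * m B ≤ m (A ∩ B)

/-! The BK inequality `P(E □ F) ≤ P(E) P(F)` for increasing `E`, `F` comes from a coupling: take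
two independent copies of the configuration and read `F` off the second copy on a set `J` of
coordinates and off the first copy elsewhere. For `J = ∅` this is `E □ F`, for `J = univ` it is
the product event `E × F`, and adding one coordinate to `J` can only increase the probability:
conditionally on the other coordinates it is `m(U ∪ V) ≤ (m ⊗ m){(x, y) | x ∈ U ∨ y ∈ V}` for
upper sets `U`, `V`, i.e. positive association of that coordinate. Iterating gives
`P(□_{j ∈ I} A_j) ≤ ∏_{j ∈ I} P(A_j)`.

For the tail, put `c = e^θ - 1`. A maximal disjointly occurring family `I₀` gives
`e^{θX} = (1 + c)^{|I₀|} ≤ ∑_I c^{|I|} 1[□_{j ∈ I} A_j]`, so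
`E e^{θX} ≤ ∏_j (1 + c P(A_j)) ≤ e^{cλ}`. The Chernoff bound with `θ = t / (λ + t/3)` and
`e^θ ≤ 1 + θ + θ² / (2(1 - θ/3))` then gives the claim. -/

lemma Real.exp_le_one_add_add_sq_div {θ : ℝ} (h0 : 0 ≤ θ) (h3 : θ < 3) :
    Real.exp θ ≤ 1 + θ + θ ^ 2 / (2 * (1 - θ / 3)) := by
  have hr : θ / 3 < 1 := by linarith
  have htail : HasSum (fun m => θ ^ (m + 2) / (m + 2).factorial)
      (Real.exp θ - ∑ m ∈ Finset.range 2, θ ^ m / m.factorial) :=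
    (hasSum_nat_add_iff' 2).mpr (Real.exp_eq_exp_ℝ ▸ NormedSpace.expSeries_div_hasSum_exp θ)
  have hgeom : HasSum (fun m => θ ^ 2 / 2 * (θ / 3) ^ m) (θ ^ 2 / 2 * (1 - θ / 3)⁻¹) :=
    (hasSum_geometric_of_lt_one (by positivity) hr).mul_left _
  have hterm (m : ℕ) : θ ^ (m + 2) / (m + 2).factorial ≤ θ ^ 2 / 2 * (θ / 3) ^ m := by
    have hfact : (2 * 3 ^ m : ℝ) ≤ (m + 2).factorial := by
      exact_mod_cast add_comm m 2 ▸ Nat.factorial_mul_pow_le_factorial (m := 2) (n := m)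
    calc θ ^ (m + 2) / (m + 2).factorial ≤ θ ^ (m + 2) / (2 * 3 ^ m) := by gcongr
      _ = θ ^ 2 / 2 * (θ / 3) ^ m := by rw [div_pow, pow_add]; field_simp
  have key := hasSum_le hterm htail hgeom
  rw [← div_eq_mul_inv, div_div] at key
  norm_num [Finset.sum_range_succ] at key
  linarith

lemma bernstein_exponent_le {lam t : ℝ} (hlam : 0 ≤ lam) (ht : 0 ≤ t) :
    (Real.exp (t / (lam + t / 3)) - 1) * lam - t / (lam + t / 3) * (lam + t) ≤
      -(t ^ 2 / (2 * (lam + t / 3))) := by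
  rcases hlam.eq_or_lt with rfl | hlam
  · rcases ht.eq_or_lt with rfl | ht
    · simp
    · field_simp
      nlinarith
  set θ := t / (lam + t / 3) with hθ
  have hden : 0 < lam + t / 3 := by positivity
  have hθ3 : θ < 3 := by rw [hθ, div_lt_iff₀ hden]; linarith
  have hexp := Real.exp_le_one_add_add_sq_div (by positivity) hθ3
  have h1 : 1 - θ / 3 = lam / (lam + t / 3) := by rw [hθ]; field_simp; ring
  calc (Real.exp θ - 1) * lam - θ * (lam + t)
      ≤ (θ + θ ^ 2 / (2 * (1 - θ / 3))) * lam - θ * (lam + t) := by gcongr; linarith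
    _ = -(t ^ 2 / (2 * (lam + t / 3))) := by rw [h1, hθ]; field_simp; ring

section FiniteProduct

variable {ι : Type*} [Fintype ι] {X : ι → Type*} [∀ i, MeasurableSpace (X i)]
  (ν : ∀ i, Measure (X i)) [∀ i, IsProbabilityMeasure (ν i)]

lemma measureReal_pi_singleton (ω : ∀ i, X i) :
    (Measure.pi ν).real {ω} = ∏ i, (ν i).real {ω i} := by
  simp [measureReal_def, ENNReal.toReal_prod]

variable [∀ i, Fintype (X i)] [∀ i, MeasurableSingletonClass (X i)]

lemma map_arrowProdEquivProdArrow_pi {Y : ι → Type*} [∀ i, Fintype (Y i)]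
    [∀ i, MeasurableSpace (Y i)] [∀ i, MeasurableSingletonClass (Y i)]
    (ν' : ∀ i, Measure (Y i)) [∀ i, IsProbabilityMeasure (ν' i)] :
    (Measure.pi fun i => (ν i).prod (ν' i)).map (Equiv.arrowProdEquivProdArrow ι X Y) =
      (Measure.pi ν).prod (Measure.pi ν') := by
  refine Measure.ext_of_singleton fun p => ?_
  rw [Measure.map_apply .of_discrete .of_discrete, ← Equiv.image_symm_eq_preimage,
    Set.image_singleton, ← Set.singleton_prod_singleton, Measure.prod_prod,
    Measure.pi_singleton, Measure.pi_singleton, Measure.pi_singleton, ← Finset.prod_mul_distrib]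
  simp [← Set.singleton_prod_singleton, Measure.prod_prod]

lemma measureReal_pi_prod_fst_snd {Y : ι → Type*} [∀ i, Fintype (Y i)]
    [∀ i, MeasurableSpace (Y i)] [∀ i, MeasurableSingletonClass (Y i)]
    (ν' : ∀ i, Measure (Y i)) [∀ i, IsProbabilityMeasure (ν' i)]
    (s : Set (∀ i, X i)) (t : Set (∀ i, Y i)) :
    (Measure.pi fun i => (ν i).prod (ν' i)).real
        {ζ | (fun i => (ζ i).1) ∈ s ∧ (fun i => (ζ i).2) ∈ t} =
      (Measure.pi ν).real s * (Measure.pi ν').real t := by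
  rw [← measureReal_prod_prod, ← map_arrowProdEquivProdArrow_pi,
    map_measureReal_apply .of_discrete .of_discrete]
  rfl

variable [DecidableEq ι]

theorem integral_pi_eq_integral_update (f : (∀ i, X i) → ℝ) (j : ι) :
    ∫ ω, f ω ∂Measure.pi ν = ∫ ω, ∫ x, f (Function.update ω j x) ∂ν j ∂Measure.pi ν := by
  simp only [integral_fintype, Integrable.of_finite, smul_eq_mul, Finset.mul_sum]
  have hweight (ω : ∀ i, X i) (x : X j) :
      (Measure.pi ν).real {Function.update ω j x} * (ν j).real {ω j} =
        (Measure.pi ν).real {ω} * (ν j).real {x} := by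
    simp only [measureReal_pi_singleton]
    rw [Finset.prod_congr rfl fun i _ => Function.apply_update (fun i y => (ν i).real {y}) ω j x i,
      Finset.prod_update_of_mem (Finset.mem_univ j),
      Finset.prod_eq_mul_prod_sdiff_singleton_of_mem (Finset.mem_univ j)]
    ring
  -- `(ω, x) ↦ (update ω j x, ω j)` is an involution, and `hweight` says it swaps the weights
  have hinv : Function.Involutive fun p : (∀ i, X i) × X j => (Function.update p.1 j p.2, p.1 j) :=
    fun p => by simp
  symm
  calc ∑ ω, ∑ x, (Measure.pi ν).real {ω} * ((ν j).real {x} * f (Function.update ω j x))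
      = ∑ p : (∀ i, X i) × X j, (Measure.pi ν).real {Function.update p.1 j p.2} *
          (ν j).real {p.1 j} * f (Function.update p.1 j p.2) := by
        rw [Fintype.sum_prod_type]
        simp only [hweight, mul_assoc]
    _ = ∑ p : (∀ i, X i) × X j, (Measure.pi ν).real {p.1} * (ν j).real {p.2} * f p.1 := by
        rw [← Equiv.sum_comp (hinv.toPerm _)]
        simp [Function.Involutive.coe_toPerm]
    _ = ∑ ω, (Measure.pi ν).real {ω} * f ω := by
        rw [Fintype.sum_prod_type]
        simp [mul_right_comm _ _ (f _), ← Finset.mul_sum]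

theorem measureReal_pi_eq_integral_update (D : Set (∀ i, X i)) (j : ι) :
    (Measure.pi ν).real D =
      ∫ ω, (ν j).real {x | Function.update ω j x ∈ D} ∂Measure.pi ν := by
  have h := integral_pi_eq_integral_update ν (D.indicator 1) j
  simp only [integral_indicator_one MeasurableSet.of_discrete] at h
  rw [h]
  congr 1 with ω
  rw [← integral_indicator_one MeasurableSet.of_discrete]
  rfl

end FiniteProduct

lemma PositivelyAssociated.measureReal_prod_union_le {Γ : Type*} [Preorder Γ]
    [MeasurableSpace Γ] {m : Measure Γ} [IsProbabilityMeasure m] (hm : PositivelyAssociated m)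
    {U V : Set Γ} (hU : IsUpperSet U) (hV : IsUpperSet V) (hUm : MeasurableSet U)
    (hVm : MeasurableSet V) :
    (m.prod m).real {z | z.1 ∈ U ∨ z.1 ∈ V} ≤ (m.prod m).real {z | z.1 ∈ U ∨ z.2 ∈ V} := by
  have hdiag : {z : Γ × Γ | z.1 ∈ U ∨ z.1 ∈ V} = (U ∪ V) ×ˢ Set.univ := by ext; simp
  have hindep : {z : Γ × Γ | z.1 ∈ U ∨ z.2 ∈ V} = (Uᶜ ×ˢ Vᶜ)ᶜ := by ext; simp [or_iff_not_and_not]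
  have hpa : m.real U * m.real V ≤ m.real (U ∩ V) := by
    simpa [measureReal_def, ENNReal.toReal_mul] using
      ENNReal.toReal_mono (measure_ne_top _ _) (hm U V hU hV)
  have hunion := measureReal_union_add_inter (μ := m) (s := U) hVm
  rw [hdiag, hindep, measureReal_prod_prod, probReal_compl_eq_one_sub (hUm.compl.prod hVm.compl),
    measureReal_prod_prod, probReal_compl_eq_one_sub hUm, probReal_compl_eq_one_sub hVm,
    probReal_univ]
  linarith

section DisjointOccurrence

variable {ι : Type*} {Ω : ι → Type*}

def OccursOn (E : Set (∀ i, Ω i)) (S : Finset ι) (ω : ∀ i, Ω i) : Prop :=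
  ∀ ω' : ∀ i, Ω i, (∀ i ∈ S, ω' i = ω i) → ω' ∈ E

lemma OccursOn.mem {E : Set (∀ i, Ω i)} {S : Finset ι} {ω : ∀ i, Ω i} (h : OccursOn E S ω) :
    ω ∈ E :=
  h ω fun _ _ => rfl

lemma OccursOn.congr {E : Set (∀ i, Ω i)} {S : Finset ι} {ω ω' : ∀ i, Ω i}
    (h : OccursOn E S ω) (hω : ∀ i ∈ S, ω i = ω' i) : OccursOn E S ω' :=
  fun σ hσ => h σ fun i hi => (hσ i hi).trans (hω i hi).symm

lemma OccursOn.of_le [∀ i, Preorder (Ω i)] {E : Set (∀ i, Ω i)} {S : Finset ι}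
    {ω ω' : ∀ i, Ω i} (hE : IsUpperSet E) (h : OccursOn E S ω) (hle : ∀ i ∈ S, ω i ≤ ω' i) :
    OccursOn E S ω' := by
  classical
  intro σ hσ
  refine hE (fun i => ?_) (h (S.piecewise ω σ) fun i hi => S.piecewise_eq_of_mem _ _ hi)
  by_cases hi : i ∈ S
  · simpa [hi, hσ i hi] using hle i hi
  · simp [hi]

def disjOccPair (E F : Set (∀ i, Ω i)) : Set ((∀ i, Ω i) × (∀ i, Ω i)) :=
  {p | ∃ S T : Finset ι, Disjoint S T ∧ OccursOn E S p.1 ∧ OccursOn F T p.2}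

/-- The event `E □ F`. -/
def disjOcc (E F : Set (∀ i, Ω i)) : Set (∀ i, Ω i) :=
  {ω | (ω, ω) ∈ disjOccPair E F}

lemma exists_isUpperSet_update_mem_disjOccPair_iff [DecidableEq ι] [∀ i, Preorder (Ω i)]
    {E F : Set (∀ i, Ω i)} (hE : IsUpperSet E) (hF : IsUpperSet F) (ω ν : ∀ i, Ω i) (j : ι) :
    ∃ U V : Set (Ω j), IsUpperSet U ∧ IsUpperSet V ∧ ∀ x y,
      (Function.update ω j x, Function.update ν j y) ∈ disjOccPair E F ↔ x ∈ U ∨ y ∈ V := by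
  have off_j {S : Finset ι} (hjS : j ∉ S) (σ : ∀ i, Ω i) (z : Ω j) :
      ∀ i ∈ S, σ i = Function.update σ j z i :=
    fun i hi => (Function.update_of_ne (ne_of_mem_of_not_mem hi hjS) z σ).symm
  refine ⟨{x | ∃ S T, Disjoint S T ∧ j ∉ T ∧
      OccursOn E S (Function.update ω j x) ∧ OccursOn F T ν},
    {y | ∃ S T, Disjoint S T ∧ j ∉ S ∧ OccursOn E S ω ∧ OccursOn F T (Function.update ν j y)},
    ?_, ?_, fun x y => ⟨?_, ?_⟩⟩
  · rintro x x' hx ⟨S, T, hST, hjT, hS, hT⟩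
    exact ⟨S, T, hST, hjT, hS.of_le hE fun i _ => update_le_update_iff'.mpr hx i, hT⟩
  · rintro y y' hy ⟨S, T, hST, hjS, hS, hT⟩
    exact ⟨S, T, hST, hjS, hS, hT.of_le hF fun i _ => update_le_update_iff'.mpr hy i⟩
  · rintro ⟨S, T, hST, hS, hT⟩
    by_cases hjT : j ∈ T
    · have hjS : j ∉ S := Finset.disjoint_right.mp hST hjT
      exact Or.inr ⟨S, T, hST, hjS, hS.congr fun i hi => (off_j hjS ω x i hi).symm, hT⟩
    · exact Or.inl ⟨S, T, hST, hjT, hS, hT.congr fun i hi => (off_j hjT ν y i hi).symm⟩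
  · rintro (⟨S, T, hST, hjT, hS, hT⟩ | ⟨S, T, hST, hjS, hS, hT⟩)
    · exact ⟨S, T, hST, hS, hT.congr (off_j hjT ν y)⟩
    · exact ⟨S, T, hST, hS.congr (off_j hjS ω x), hT⟩

end DisjointOccurrence

section BK

variable {ι : Type*} [DecidableEq ι] {Ω : ι → Type*}

def disjOccCoupling (E F : Set (∀ i, Ω i)) (J : Finset ι) : Set (∀ i, Ω i × Ω i) :=
  {ζ | (fun i => (ζ i).1, J.piecewise (fun i => (ζ i).2) (fun i => (ζ i).1)) ∈ disjOccPair E F}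

lemma disjOccCoupling_empty (E F : Set (∀ i, Ω i)) :
    disjOccCoupling E F ∅ =
      {ζ | (fun i => (ζ i).1) ∈ disjOcc E F ∧ (fun i => (ζ i).2) ∈ Set.univ} := by
  ext ζ
  simp [disjOccCoupling, disjOcc]

variable [Fintype ι]

lemma disjOccCoupling_univ_subset (E F : Set (∀ i, Ω i)) :
    disjOccCoupling E F Finset.univ ⊆ {ζ | (fun i => (ζ i).1) ∈ E ∧ (fun i => (ζ i).2) ∈ F} := by
  rintro ζ ⟨S, T, -, hS, hT⟩
  exact ⟨hS.mem, by simpa using hT.mem⟩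

variable [∀ i, Fintype (Ω i)] [∀ i, Preorder (Ω i)] [∀ i, MeasurableSpace (Ω i)]
  [∀ i, MeasurableSingletonClass (Ω i)] {μ : ∀ i, Measure (Ω i)} [∀ i, IsProbabilityMeasure (μ i)]

/-- Conditionally on the other coordinates, this is positive association of `μ j`. -/
lemma measureReal_disjOccCoupling_le_insert (hPA : ∀ i, PositivelyAssociated (μ i))
    {E F : Set (∀ i, Ω i)} (hE : IsUpperSet E) (hF : IsUpperSet F) {J : Finset ι} {j : ι}
    (hj : j ∉ J) :
    (Measure.pi fun i => (μ i).prod (μ i)).real (disjOccCoupling E F J) ≤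
      (Measure.pi fun i => (μ i).prod (μ i)).real (disjOccCoupling E F (insert j J)) := by
  rw [measureReal_pi_eq_integral_update _ _ j, measureReal_pi_eq_integral_update _ _ j]
  refine integral_mono Integrable.of_finite Integrable.of_finite fun ζ => ?_
  obtain ⟨U, V, hU, hV, hUV⟩ := exists_isUpperSet_update_mem_disjOccPair_iff hE hF
    (fun i => (ζ i).1) (J.piecewise (fun i => (ζ i).2) (fun i => (ζ i).1)) j
  have hfst (z : Ω j × Ω j) :
      (fun i => (Function.update ζ j z i).1) = Function.update (fun i => (ζ i).1) j z.1 := by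
    ext i; rcases eq_or_ne i j with rfl | hi <;> simp [*]
  have hJ (z : Ω j × Ω j) : J.piecewise (fun i => (Function.update ζ j z i).2)
      (fun i => (Function.update ζ j z i).1) =
        Function.update (J.piecewise (fun i => (ζ i).2) (fun i => (ζ i).1)) j z.1 := by
    ext i; rcases eq_or_ne i j with rfl | hi <;> simp [Finset.piecewise, *]
  have hJj (z : Ω j × Ω j) : (insert j J).piecewise (fun i => (Function.update ζ j z i).2)
      (fun i => (Function.update ζ j z i).1) =
        Function.update (J.piecewise (fun i => (ζ i).2) (fun i => (ζ i).1)) j z.2 := by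
    ext i; rcases eq_or_ne i j with rfl | hi <;> simp [Finset.piecewise, *]
  have hdiag : {z | Function.update ζ j z ∈ disjOccCoupling E F J} = {z | z.1 ∈ U ∨ z.1 ∈ V} := by
    ext z; simp only [disjOccCoupling, Set.mem_ofPred_eq]; rw [hJ, hfst, hUV]
  have hsplit : {z | Function.update ζ j z ∈ disjOccCoupling E F (insert j J)} =
      {z | z.1 ∈ U ∨ z.2 ∈ V} := by
    ext z; simp only [disjOccCoupling, Set.mem_ofPred_eq]; rw [hJj, hfst, hUV]
  rw [hdiag, hsplit]
  exact (hPA j).measureReal_prod_union_le hU hV .of_discrete .of_discrete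

/-- The **BK inequality**. -/
theorem measureReal_disjOcc_le (hPA : ∀ i, PositivelyAssociated (μ i)) {E F : Set (∀ i, Ω i)}
    (hE : IsUpperSet E) (hF : IsUpperSet F) :
    (Measure.pi μ).real (disjOcc E F) ≤ (Measure.pi μ).real E * (Measure.pi μ).real F := by
  set P := Measure.pi fun i => (μ i).prod (μ i)
  have hmono (J : Finset ι) : P.real (disjOccCoupling E F ∅) ≤ P.real (disjOccCoupling E F J) := by
    induction J using Finset.induction_on with
    | empty => rfl
    | insert j J hj ih => exact ih.trans (measureReal_disjOccCoupling_le_insert hPA hE hF hj)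
  calc (Measure.pi μ).real (disjOcc E F)
      = P.real (disjOccCoupling E F ∅) := by
        rw [disjOccCoupling_empty, measureReal_pi_prod_fst_snd, probReal_univ, mul_one]
    _ ≤ P.real (disjOccCoupling E F Finset.univ) := hmono _
    _ ≤ P.real {ζ | (fun i => (ζ i).1) ∈ E ∧ (fun i => (ζ i).2) ∈ F} :=
        measureReal_mono (disjOccCoupling_univ_subset E F)
    _ = (Measure.pi μ).real E * (Measure.pi μ).real F := measureReal_pi_prod_fst_snd _ _ _ _

end BK

section Occurrence

variable {n : ℕ} {Ω : Fin n → Type*} {κ : Type*} {A : κ → Set (∀ i, Ω i)}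

lemma occurDisjointly_empty (A : κ → Set (∀ i, Ω i)) (ω : ∀ i, Ω i) : OccurDisjointly A ∅ ω :=
  ⟨fun _ => ∅, by simp, by simp⟩

lemma OccurDisjointly.mono {I J : Finset κ} {ω : ∀ i, Ω i} (h : OccurDisjointly A J ω)
    (hIJ : I ⊆ J) : OccurDisjointly A I ω := by
  obtain ⟨S, hS, hocc⟩ := h
  exact ⟨S, fun j hj j' hj' => hS j (hIJ hj) j' (hIJ hj'), fun j hj => hocc j (hIJ hj)⟩

lemma isUpperSet_setOf_occurDisjointly [∀ i, Preorder (Ω i)] (hA : ∀ j, IsUpperSet (A j))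
    (I : Finset κ) : IsUpperSet {ω | OccurDisjointly A I ω} := by
  rintro ω ω' hle ⟨S, hS, hocc⟩
  exact ⟨S, hS, fun j hj => OccursOn.of_le (hA j) (hocc j hj) fun i _ => hle i⟩

lemma setOf_occurDisjointly_insert_subset [DecidableEq κ] {I : Finset κ} {j : κ} (hj : j ∉ I) :
    {ω | OccurDisjointly A (insert j I) ω} ⊆ disjOcc (A j) {ω | OccurDisjointly A I ω} := by
  rintro ω ⟨S, hS, hocc⟩
  have hS' : ∀ a ∈ I, ∀ b ∈ I, a ≠ b → Disjoint (S a) (S b) := fun a ha b hb =>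
    hS a (Finset.mem_insert_of_mem ha) b (Finset.mem_insert_of_mem hb)
  refine ⟨S j, I.biUnion S, ?_, hocc j (Finset.mem_insert_self j I), fun ω' hω' => ?_⟩
  · exact (Finset.disjoint_biUnion_right _ _ _).mpr fun a ha => hS j (Finset.mem_insert_self j I) a
      (Finset.mem_insert_of_mem ha) fun h => hj (h ▸ ha)
  · refine ⟨S, hS', fun a ha => OccursOn.congr (hocc a (Finset.mem_insert_of_mem ha)) ?_⟩
    exact fun i hi => (hω' i (Finset.mem_biUnion.mpr ⟨a, ha, hi⟩)).symm

theorem measureReal_setOf_occurDisjointly_le [DecidableEq κ] [∀ i, Fintype (Ω i)]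
    [∀ i, Preorder (Ω i)] [∀ i, MeasurableSpace (Ω i)] [∀ i, MeasurableSingletonClass (Ω i)]
    {μ : ∀ i, Measure (Ω i)} [∀ i, IsProbabilityMeasure (μ i)]
    (hPA : ∀ i, PositivelyAssociated (μ i)) (hA : ∀ j, IsUpperSet (A j)) (I : Finset κ) :
    (Measure.pi μ).real {ω | OccurDisjointly A I ω} ≤ ∏ j ∈ I, (Measure.pi μ).real (A j) := by
  induction I using Finset.induction_on with
  | empty => simp
  | insert j I hj ih =>
    calc (Measure.pi μ).real {ω | OccurDisjointly A (insert j I) ω}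
        ≤ (Measure.pi μ).real (disjOcc (A j) {ω | OccurDisjointly A I ω}) :=
          measureReal_mono (setOf_occurDisjointly_insert_subset hj)
      _ ≤ (Measure.pi μ).real (A j) * (Measure.pi μ).real {ω | OccurDisjointly A I ω} :=
          measureReal_disjOcc_le hPA (hA j) (isUpperSet_setOf_occurDisjointly hA I)
      _ ≤ ∏ j ∈ insert j I, (Measure.pi μ).real (A j) := by
          rw [Finset.prod_insert hj]; gcongr

lemma exists_card_eq_maxDisjOcc {k : ℕ} (A : Fin k → Set (∀ i, Ω i)) (ω : ∀ i, Ω i) :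
    ∃ I : Finset (Fin k), I.card = maxDisjOcc A ω ∧ OccurDisjointly A I ω := by
  refine Nat.sSup_mem (s := {m | ∃ I : Finset (Fin k), I.card = m ∧ OccurDisjointly A I ω})
    ⟨0, ∅, rfl, occurDisjointly_empty A ω⟩ ⟨k, ?_⟩
  rintro _ ⟨I, rfl, -⟩
  simpa using I.card_le_univ

end Occurrence

section Chernoff

variable {α κ : Type*} [Fintype α] [MeasurableSpace α] [MeasurableSingletonClass α]
  {P : Measure α} [IsProbabilityMeasure P] [Fintype κ] {B : Finset κ → Set α} {p : κ → ℝ}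
  {N : α → ℕ}

lemma mgf_le_exp_of_antitone (hB : Antitone B) (hBp : ∀ I, P.real (B I) ≤ ∏ j ∈ I, p j)
    (hN : ∀ ω, ∃ I, I.card = N ω ∧ ω ∈ B I) {θ : ℝ} (hθ : 0 ≤ θ) :
    mgf (fun ω => (N ω : ℝ)) P θ ≤ Real.exp ((Real.exp θ - 1) * ∑ j, p j) := by
  set c := Real.exp θ - 1
  have hc : 0 ≤ c := sub_nonneg.mpr (Real.one_le_exp hθ)
  have hp (j : κ) : 0 ≤ p j := by simpa using measureReal_nonneg.trans (hBp {j})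
  -- `exp (θ N) = (1 + c) ^ N` expands into `c ^ #I` over the subsets `I` of a maximal witness
  have hpoint (ω : α) : Real.exp (θ * N ω) ≤ ∑ I, (B I).indicator (fun _ => c ^ I.card) ω := by
    obtain ⟨I₀, hcard, hω⟩ := hN ω
    calc Real.exp (θ * N ω) = ∏ _j ∈ I₀, (1 + c) := by
          rw [mul_comm, Real.exp_nat_mul, Finset.prod_const, hcard, add_sub_cancel]
      _ = ∑ I ∈ I₀.powerset, (B I).indicator (fun _ => c ^ I.card) ω := by
          rw [Finset.prod_one_add]
          refine Finset.sum_congr rfl fun I hI => ?_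
          rw [Set.indicator_of_mem (hB (Finset.mem_powerset.mp hI) hω), Finset.prod_const]
      _ ≤ ∑ I, (B I).indicator (fun _ => c ^ I.card) ω :=
          Finset.sum_le_sum_of_subset_of_nonneg (Finset.subset_univ _) fun I _ _ =>
            Set.indicator_nonneg (fun _ _ => by positivity) ω
  calc mgf (fun ω => (N ω : ℝ)) P θ
      ≤ ∫ ω, ∑ I, (B I).indicator (fun _ => c ^ I.card) ω ∂P :=
        integral_mono Integrable.of_finite Integrable.of_finite hpoint
    _ = ∑ I, P.real (B I) * c ^ I.card := by
        rw [integral_finsetSum _ fun _ _ => Integrable.of_finite]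
        simp [integral_indicator_const _ MeasurableSet.of_discrete]
    _ ≤ ∑ I, (∏ j ∈ I, p j) * c ^ I.card := by gcongr with I; exact hBp I
    _ = ∏ j, (1 + c * p j) := by
        rw [Finset.prod_one_add, Finset.powerset_univ]
        simp [Finset.prod_mul_distrib, mul_comm]
    _ ≤ ∏ j, Real.exp (c * p j) :=
        Finset.prod_le_prod (fun j _ => by have := hp j; positivity)
          fun j _ => by linarith [Real.add_one_le_exp (c * p j)]
    _ = Real.exp (c * ∑ j, p j) := by rw [Finset.mul_sum, Real.exp_sum]

theorem measureReal_le_exp_of_antitone (hB : Antitone B)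
    (hBp : ∀ I, P.real (B I) ≤ ∏ j ∈ I, p j) (hN : ∀ ω, ∃ I, I.card = N ω ∧ ω ∈ B I)
    {t : ℝ} (ht : 0 ≤ t) :
    P.real {ω | (∑ j, p j) + t ≤ N ω} ≤
      Real.exp (-(t ^ 2 / (2 * ((∑ j, p j) + t / 3)))) := by
  set lam := ∑ j, p j
  have hlam : 0 ≤ lam :=
    Finset.sum_nonneg fun j _ => by simpa using measureReal_nonneg.trans (hBp {j})
  set θ := t / (lam + t / 3)
  have hθ : 0 ≤ θ := by positivity
  calc P.real {ω | lam + t ≤ N ω}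
      ≤ Real.exp (-θ * (lam + t)) * mgf (fun ω => (N ω : ℝ)) P θ :=
        measure_ge_le_exp_mul_mgf _ hθ Integrable.of_finite
    _ ≤ Real.exp (-θ * (lam + t)) * Real.exp ((Real.exp θ - 1) * lam) := by
        gcongr; exact mgf_le_exp_of_antitone hB hBp hN hθ
    _ = Real.exp ((Real.exp θ - 1) * lam - θ * (lam + t)) := by rw [← Real.exp_add]; ring_nf
    _ ≤ Real.exp (-(t ^ 2 / (2 * (lam + t / 3)))) :=
        Real.exp_le_exp.mpr (bernstein_exponent_le hlam ht)

end Chernoff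

/-- **Chernoff-type upper tail bound for disjoint occurrence of increasing events.**
In a finite product probability space with positively associated factors, if
`A 1, …, A k` are increasing events, `X` is the maximal number of them occurring
disjointly, and `λ = Σ μ(A i)`, then for `t ≥ 0`,
`Pr(X ≥ λ + t) ≤ exp(−t²/(2(λ + t/3)))`. -/
theorem extended_BK_bernstein
    {n k : ℕ} {Ω : Fin n → Type*}
    [∀ i, Fintype (Ω i)] [∀ i, PartialOrder (Ω i)]
    [∀ i, MeasurableSpace (Ω i)] [∀ i, MeasurableSingletonClass (Ω i)]
    (μi : ∀ i, Measure (Ω i)) [∀ i, IsProbabilityMeasure (μi i)]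
    (hPA : ∀ i, PositivelyAssociated (μi i))
    (A : Fin k → Set (∀ i, Ω i))
    (hA : ∀ j, IsUpperSet (A j))
    (lam : ℝ) (hlam : lam = ∑ i, (Measure.pi μi (A i)).toReal) :
    ∀ t : ℝ, 0 ≤ t →
      (Measure.pi μi {ω | lam + t ≤ (maxDisjOcc A ω : ℝ)}).toReal ≤
        Real.exp (-(t ^ 2 / (2 * (lam + t / 3)))) := by
  intro t ht
  subst hlam
  exact measureReal_le_exp_of_antitone (B := fun I => {ω | OccurDisjointly A I ω})
    (fun _ _ hIJ _ h => OccurDisjointly.mono h hIJ) (measureReal_setOf_occurDisjointly_le hPA hA)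
    (exists_card_eq_maxDisjOcc A) ht
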